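/- If u > √3, then there exists z₀ ∈ (0,1) such that the derivative of Φ₁(z) = Φ(A_{u,1}; z) satisfies Φ₁′(z) < 1 for z < z₀ and Φ₁′(z) > 1 for z₀ < z ≤ 1. -/

import Mathlib

/-!
Write `x = xu u` and `a = u²x²`, so that `Φ₁(z) = x / (1 - a(z+1))` and
`Φ₁'(z) = a x / (1 - a(z+1))²`. The denominator `1 - a(z+1)` is positive and strictly decreasing
on `[0, 1]`, so `Φ₁'` crosses `1` exactly once, at the point `z₀` where `1 - a(z₀+1) = √(a x)`.
Since `2a = 1 - x`, the denominator runs from `1 - a = (1 + x)/2` at `z = 0` down to `x` at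
`z = 1`; hence `z₀ ∈ (0, 1)` amounts to `x < √(a x) < (1 + x)/2`. The right inequality always
holds, and the left one is `x < a`, i.e. `x < 1/3`, which is exactly `u > √3`.
-/

noncomputable def xu (u : ℝ) : ℝ := 2 / (1 + Real.sqrt (1 + 8 * u ^ 2))

noncomputable def Phi1 (u z : ℝ) : ℝ := xu u / (1 - u ^ 2 * (xu u) ^ 2 * (z + 1))

open Set

lemma xu_pos (u : ℝ) : 0 < xu u := by
  unfold xu; positivity

lemma two_mul_sq_mul_xu_sq (u : ℝ) : 2 * u ^ 2 * xu u ^ 2 = 1 - xu u := by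
  have hs : Real.sqrt (1 + 8 * u ^ 2) ^ 2 = 1 + 8 * u ^ 2 := Real.sq_sqrt (by positivity)
  have hs0 : 0 ≤ Real.sqrt (1 + 8 * u ^ 2) := Real.sqrt_nonneg _
  unfold xu
  generalize Real.sqrt (1 + 8 * u ^ 2) = s at hs hs0 ⊢
  have hs1 : 1 + s ≠ 0 := by positivity
  field_simp
  linear_combination -hs

lemma xu_lt_one_third {u : ℝ} (hu : Real.sqrt 3 < u) : xu u < 1 / 3 := by
  have hu3 : 3 < u ^ 2 := (Real.sqrt_lt' ((Real.sqrt_nonneg 3).trans_lt hu)).1 hu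
  have hs : 5 < Real.sqrt (1 + 8 * u ^ 2) := Real.lt_sqrt (by norm_num) |>.2 (by linarith)
  unfold xu
  rw [div_lt_iff₀ (by positivity)]
  linarith

lemma xu_le_one_sub_mul {u z : ℝ} (hz : z ≤ 1) : xu u ≤ 1 - u ^ 2 * xu u ^ 2 * (z + 1) := by
  have h := two_mul_sq_mul_xu_sq u
  have ha : 0 ≤ u ^ 2 * xu u ^ 2 := by positivity
  nlinarith

lemma hasDerivAt_div_one_sub_mul {c a z : ℝ} (hz : 1 - a * (z + 1) ≠ 0) :
    HasDerivAt (fun z ↦ c / (1 - a * (z + 1))) (a * c / (1 - a * (z + 1)) ^ 2) z := by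
  have hden : HasDerivAt (fun z ↦ 1 - a * (z + 1)) (-a) z := by
    simpa using (((hasDerivAt_id z).add_const 1).const_mul a).const_sub 1
  rw [show a * c / (1 - a * (z + 1)) ^ 2 = (0 * (1 - a * (z + 1)) - c * -a) / (1 - a * (z + 1)) ^ 2
    by ring]
  exact (hasDerivAt_const z c).div hden hz

lemma deriv_Phi1 {u z : ℝ} (hz : z ≤ 1) :
    deriv (Phi1 u) z = u ^ 2 * xu u ^ 2 * xu u / (1 - u ^ 2 * xu u ^ 2 * (z + 1)) ^ 2 :=
  (hasDerivAt_div_one_sub_mul ((xu_pos u).trans_le (xu_le_one_sub_mul hz)).ne').deriv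

section Crossing

variable {a p z z₀ : ℝ}

lemma div_sq_one_sub_mul_lt_one_iff (ha : 0 < a) (hz₀ : 1 - a * (z₀ + 1) = Real.sqrt p)
    (hz : 0 < 1 - a * (z + 1)) : p / (1 - a * (z + 1)) ^ 2 < 1 ↔ z < z₀ := by
  rw [div_lt_one (by positivity), ← Real.sqrt_lt' hz, ← hz₀, sub_lt_sub_iff_left,
    mul_lt_mul_iff_right₀ ha, add_lt_add_iff_right]

lemma one_lt_div_sq_one_sub_mul_iff (ha : 0 < a) (hz₀ : 1 - a * (z₀ + 1) = Real.sqrt p)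
    (hz : 0 < 1 - a * (z + 1)) : 1 < p / (1 - a * (z + 1)) ^ 2 ↔ z₀ < z := by
  rw [one_lt_div (by positivity), ← Real.lt_sqrt hz.le, ← hz₀, sub_lt_sub_iff_left,
    mul_lt_mul_iff_right₀ ha, add_lt_add_iff_right]

lemma exists_mem_Ioo_one_sub_mul_eq {s : ℝ} (ha : 0 < a) (h₀ : s < 1 - a) (h₁ : 1 - 2 * a < s) :
    ∃ z₀ ∈ Ioo (0 : ℝ) 1, 1 - a * (z₀ + 1) = s := by
  refine ⟨(1 - s) / a - 1, ⟨?_, ?_⟩, ?_⟩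
  · rw [sub_pos, one_lt_div ha]; linarith
  · rw [sub_lt_iff_lt_add, div_lt_iff₀ ha]; linarith
  · field_simp; ring

end Crossing

theorem stmt_8 (u : ℝ) (hu : Real.sqrt 3 < u) :
    ∃ z₀ ∈ Set.Ioo (0 : ℝ) 1,
      (∀ z ∈ Set.Icc (0 : ℝ) 1, z < z₀ → deriv (Phi1 u) z < 1) ∧
      (∀ z ∈ Set.Icc (0 : ℝ) 1, z₀ < z → 1 < deriv (Phi1 u) z) := by
  set x := xu u
  set a := u ^ 2 * x ^ 2
  have hx : 0 < x := xu_pos u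
  have h2a : 2 * a = 1 - x := by rw [← two_mul_sq_mul_xu_sq u]; ring
  have hxa : x < a := by linarith [xu_lt_one_third hu]
  have ha : 0 < a := hx.trans hxa
  have hlo : 1 - 2 * a < Real.sqrt (a * x) :=
    Real.lt_sqrt (by linarith) |>.2 (by nlinarith)
  have hhi : Real.sqrt (a * x) < 1 - a :=
    (Real.sqrt_lt' (by linarith)).2 (by nlinarith)
  obtain ⟨z₀, hz₀, hz₀s⟩ := exists_mem_Ioo_one_sub_mul_eq ha hhi hlo
  have hden : ∀ z ∈ Icc (0 : ℝ) 1, 0 < 1 - a * (z + 1) := fun z hz ↦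
    hx.trans_le (xu_le_one_sub_mul hz.2)
  refine ⟨z₀, hz₀, fun z hz hlt ↦ ?_, fun z hz hlt ↦ ?_⟩
  · rw [deriv_Phi1 hz.2]
    exact (div_sq_one_sub_mul_lt_one_iff ha hz₀s (hden z hz)).2 hlt
  · rw [deriv_Phi1 hz.2]
    exact (one_lt_div_sq_one_sub_mul_iff ha hz₀s (hden z hz)).2 hlt
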